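/- L_S is a cogenerator in L-Top₀: if (X, τ) and (Y, δ) are T₀ L-topological spaces and f, g : (X, τ) → (Y, δ) are continuous maps with f ≠ g, then there exists a continuous map h : (Y, δ) → L_S with h ∘ f ≠ h ∘ g. -/

import Mathlib

universe u v

/-- `τ` is an `L`-topology on `X`: a set of `L`-sets closed under arbitrary pointwise
suprema (including the empty one, `⊥`) and finite pointwise infima (including the
empty one, `⊤`). -/
def IsLTop {L : Type*} [Order.Frame L] {X : Type*} (τ : Set (X → L)) : Prop :=
  (∀ S ⊆ τ, sSup S ∈ τ) ∧ ∀ S ⊆ τ, S.Finite → sInf S ∈ τ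

/-- `f` is continuous from `(X, τ)` to `(Y, δ)`. -/
def LCont {L : Type*} [Order.Frame L] {X Y : Type*}
    (τ : Set (X → L)) (δ : Set (Y → L)) (f : X → Y) : Prop :=
  ∀ ν ∈ δ, ν ∘ f ∈ τ

/-- The Sierpinski `L`-topology on `L`: generated by `id`, it consists of the constant
function `⊥`, the identity, and the constant function `⊤`. -/
def sierpinskiLTop (L : Type*) [Order.Frame L] : Set (L → L) :=
  {⊥, id, ⊤}

/-- `(X, τ)` is a T₀ `L`-topological space. -/
def IsT0LTop {L : Type*} [Order.Frame L] {X : Type*} (τ : Set (X → L)) : Prop :=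
  ∀ x y : X, x ≠ y → ∃ μ ∈ τ, μ x ≠ μ y

/-- `f : (X,τ) → (Y,δ)` is an embedding: `f` is injective and `τ = {ν ∘ f | ν ∈ δ}`. -/
def IsLEmbedding {L : Type*} [Order.Frame L] {X Y : Type*}
    (τ : Set (X → L)) (δ : Set (Y → L)) (f : X → Y) : Prop :=
  Function.Injective f ∧ τ = {μ | ∃ ν ∈ δ, μ = ν ∘ f}

/-- The smallest `L`-topology containing a family `ζ` of `L`-sets. -/
def genLTop {L : Type*} [Order.Frame L] {X : Type*} (ζ : Set (X → L)) : Set (X → L) :=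
  ⋂₀ {τ | IsLTop τ ∧ ζ ⊆ τ}

/-- The product `L`-topology on `∀ i, X i`: the smallest `L`-topology containing all
`ν ∘ pᵢ` with `ν ∈ τ i`. -/
def prodLTop {L : Type*} [Order.Frame L] {I : Type*} {X : I → Type*}
    (τ : ∀ i, Set (X i → L)) : Set ((∀ i, X i) → L) :=
  genLTop {μ | ∃ i, ∃ ν ∈ τ i, μ = fun x => ν (x i)}

/-- The product of `I` copies of the Sierpinski `L`-space, `L_S^I`. -/
def sierpinskiPow (L : Type*) [Order.Frame L] (I : Type*) : Set ((I → L) → L) :=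
  prodLTop fun _ : I => sierpinskiLTop L

/-- The subspace `L`-topology on `M ⊆ Y`: restrictions of members of `δ`. -/
def subLTop {L : Type*} [Order.Frame L] {Y : Type*} (δ : Set (Y → L)) (M : Set Y) :
    Set (↥M → L) :=
  {ν | ∃ μ ∈ δ, ν = fun y => μ y.1}

/-- Homeomorphism: a continuous bijection with continuous inverse. -/
def IsLHomeo {L : Type*} [Order.Frame L] {X Y : Type*}
    (τ : Set (X → L)) (δ : Set (Y → L)) (f : X → Y) : Prop :=
  LCont τ δ f ∧
    ∃ g : Y → X, LCont δ τ g ∧ Function.LeftInverse g f ∧ Function.RightInverse g f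

/-- Epimorphism in `L`-**Top₀**. -/
def IsLEpiT0 {L : Type*} [Order.Frame L] {X Y : Type*}
    (τ : Set (X → L)) (δ : Set (Y → L)) (f : X → Y) : Prop :=
  ∀ (Z : Type*) (Δ : Set (Z → L)), IsLTop Δ → IsT0LTop Δ →
    ∀ g h : Y → Z, LCont δ Δ g → LCont δ Δ h → g ∘ f = h ∘ f → g = h

/-- The `[ ]`-closure of `M` in `(Y, δ)`: the intersection of the equalizers of all pairs
of continuous maps into T₀ `L`-topological spaces that agree on `M`. -/
def brClosure {L : Type*} [Order.Frame L] {Y : Type*} (δ : Set (Y → L)) (M : Set Y) :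
    Set Y :=
  {y | ∀ (Z : Type*) (Δ : Set (Z → L)), IsLTop Δ → IsT0LTop Δ →
    ∀ g h : Y → Z, LCont δ Δ g → LCont δ Δ h → (∀ m ∈ M, g m = h m) → g y = h y}

/-- `p` is a frame homomorphism from the frame `τ` (ordered pointwise, with pointwise
suprema and finite infima) to `L`: it preserves arbitrary suprema and finite infima. -/
def IsLFrameHom {L : Type*} [Order.Frame L] {X : Type*} (τ : Set (X → L))
    (p : ↥τ → L) : Prop :=
  (∀ (S : Set (X → L)) (hS : S ⊆ τ) (h : sSup S ∈ τ),
    p ⟨sSup S, h⟩ = ⨆ μ : S, p ⟨μ.1, hS μ.2⟩) ∧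
  ∀ (S : Set (X → L)) (hS : S ⊆ τ), S.Finite → ∀ h : sInf S ∈ τ,
    p ⟨sInf S, h⟩ = ⨅ μ : S, p ⟨μ.1, hS μ.2⟩

/-- `pt_L(τ)`: the collection of frame homomorphisms `τ → L`. -/
def LPt {L : Type*} [Order.Frame L] {X : Type*} (τ : Set (X → L)) : Type _ :=
  {p : ↥τ → L // IsLFrameHom τ p}

/-- The `L`-topology `φ_L(τ) = {φ_L(μ) | μ ∈ τ}` on `pt_L(τ)`, where `φ_L(μ)(p) = p(μ)`. -/
def phiTop {L : Type*} [Order.Frame L] {X : Type*} (τ : Set (X → L)) :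
    Set (LPt τ → L) :=
  {ν | ∃ μ : ↥τ, ν = fun p => p.1 μ}

/-- `(X, τ)` is sober: every frame homomorphism `p : τ → L` is given by evaluation at a
unique point of `X`. -/
def IsLSober {L : Type*} [Order.Frame L] {X : Type*} (τ : Set (X → L)) : Prop :=
  ∀ p : ↥τ → L, IsLFrameHom τ p → ∃! x : X, ∀ μ : ↥τ, p μ = μ.1 x

/-- `η_X : X → pt_L(τ)`, `η_X(x)(μ) = μ(x)`. -/
def etaPt {L : Type*} [Order.Frame L] {X : Type*} (τ : Set (X → L)) (x : X) : LPt τ :=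
  ⟨fun μ => μ.1 x,
    ⟨fun S hS h => by simp [sSup_apply], fun S hS hfin h => by simp [sInf_apply]⟩⟩

/-- The image `f^→(μ)` of an `L`-set under a map. -/
def LImage {L : Type*} [Order.Frame L] {X Y : Type*} (f : X → Y) (μ : X → L) : Y → L :=
  fun y => ⨆ x ∈ f ⁻¹' {y}, μ x

/-- The T₀-identification relation: `x ~ y` iff `μ x = μ y` for all `μ ∈ τ`. -/
def t0Rel {L : Type*} [Order.Frame L] {X : Type*} (τ : Set (X → L)) (x y : X) : Prop :=
  ∀ μ ∈ τ, μ x = μ y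

/-- The quotient `X/~`. -/
def T0Quot {L : Type*} [Order.Frame L] {X : Type*} (τ : Set (X → L)) : Type _ :=
  Quot (t0Rel τ)

/-- The quotient map `q : X → X/~`. -/
def t0q {L : Type*} [Order.Frame L] {X : Type*} (τ : Set (X → L)) : X → T0Quot τ :=
  Quot.mk _

/-- The quotient `L`-topology on `X/~`. -/
def t0QuotTop {L : Type*} [Order.Frame L] {X : Type*} (τ : Set (X → L)) :
    Set (T0Quot τ → L) :=
  {ν | ν ∘ t0q τ ∈ τ}

/-- All finite pointwise infima of members of `ζ`. -/
def finInfs {L : Type*} [Order.Frame L] {X : Type*} (ζ : Set (X → L)) : Set (X → L) :=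
  {μ | ∃ F ⊆ ζ, F.Finite ∧ μ = sInf F}

/-- `⟨ζ⟩`: all pointwise suprema of sets of finite pointwise infima of members of `ζ`. -/
def genSupInf {L : Type*} [Order.Frame L] {X : Type*} (ζ : Set (X → L)) : Set (X → L) :=
  {μ | ∃ G ⊆ finInfs ζ, μ = sSup G}

theorem IsLTop.bot_mem {L : Type*} [Order.Frame L] {X : Type*} {τ : Set (X → L)}
    (hτ : IsLTop τ) : (⊥ : X → L) ∈ τ := by
  simpa using hτ.1 ∅ (Set.empty_subset _)

theorem IsLTop.top_mem {L : Type*} [Order.Frame L] {X : Type*} {τ : Set (X → L)}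
    (hτ : IsLTop τ) : (⊤ : X → L) ∈ τ := by
  simpa using hτ.2 ∅ (Set.empty_subset _) Set.finite_empty

theorem lCont_sierpinskiLTop_of_mem {L : Type*} [Order.Frame L] {X : Type*}
    {τ : Set (X → L)} (hτ : IsLTop τ) {μ : X → L} (hμ : μ ∈ τ) :
    LCont τ (sierpinskiLTop L) μ := by
  rintro ν (rfl | rfl | rfl)
  · exact hτ.bot_mem
  · exact hμ
  · exact hτ.top_mem

theorem stmt3_general {L : Type*} [Order.Frame L] {X Y : Type*}
    (δ : Set (Y → L)) (hδ : IsLTop δ)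
    (hYT0 : IsT0LTop δ)
    (f g : X → Y) (hne : f ≠ g) :
    ∃ h : Y → L, LCont δ (sierpinskiLTop L) h ∧ h ∘ f ≠ h ∘ g := by
  obtain ⟨x, hx⟩ := Function.ne_iff.mp hne
  obtain ⟨μ, hμδ, hμ⟩ := hYT0 _ _ hx
  exact ⟨μ, lCont_sierpinskiLTop_of_mem hδ hμδ, fun hc => hμ (congrFun hc x)⟩

/-- `L_S` is a cogenerator in `L`-**Top₀**. -/
theorem stmt3 {L : Type*} [Order.Frame L] {X Y : Type*}
    (τ : Set (X → L)) (δ : Set (Y → L)) (hτ : IsLTop τ) (hδ : IsLTop δ)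
    (hXT0 : IsT0LTop τ) (hYT0 : IsT0LTop δ)
    (f g : X → Y) (hf : LCont τ δ f) (hg : LCont τ δ g) (hne : f ≠ g) :
    ∃ h : Y → L, LCont δ (sierpinskiLTop L) h ∧ h ∘ f ≠ h ∘ g :=
  stmt3_general δ hδ hYT0 f g hne
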